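/- arXiv:0910.4004 — 4 statements merged into one kernel-verified Lean document; each statement's English description precedes it below -/
import Mathlib

section
/- Let u, v : ℝ³ → ℝ be smooth functions of (x,y,t). For smooth functions Ψ : ℝ⁴ → ℝ of (x,y,t,p), define the first-order operators D₁Ψ = Ψ_y − (p − v_x)Ψ_x + u_x Ψ_p and D₂Ψ = Ψ_t − (p² − v_x p + u − v_y)Ψ_x + (u_x p + u_y)Ψ_p (here u, v and their derivatives are evaluated at (x,y,t) and subscripts denote partial derivatives). Then D₁(D₂Ψ) = D₂(D₁Ψ) holds for every smooth Ψ at every point (x,y,t,p) if and only if u and v satisfy the Manakov–Santini system: u_{xt} = u_{yy} + (u u_x)_x + v_x u_{xy} − u_{xx} v_y and v_{xt} = v_{yy} + u v_{xx} + v_x v_{xy} − v_{xx} v_y. -/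
/-!
`D₁` and `D₂` are differentiation along the vector fields
`X₁ = (v_x − p, 1, 0, u_x)` and `X₂ = (v_x p − p² − u + v_y, 0, 1, u_x p + u_y)` on
`(x, y, t, p)`-space, so by symmetry of second derivatives `D₁D₂Ψ − D₂D₁Ψ` is the derivative of
`Ψ` along the Lie bracket `[X₁, X₂]`. A direct computation, in which all dependence on `p`
cancels, gives `[X₁, X₂] = −(R_v, 0, 0, R_u)`, where `R_u = 0` and `R_v = 0` are the two
Manakov–Santini equations. Finally, a vector field vanishes iff differentiation along it kills
every smooth function; already the linear ones suffice, by Hahn–Banach.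
-/
/-- Partial derivative in the first coordinate `x` of a function on `ℝ³ = (x,y,t)`. -/
noncomputable def pd3x (f : ℝ × ℝ × ℝ → ℝ) (r : ℝ × ℝ × ℝ) : ℝ :=
  deriv (fun s => f (s, r.2.1, r.2.2)) r.1

/-- Partial derivative in the second coordinate `y` of a function on `ℝ³ = (x,y,t)`. -/
noncomputable def pd3y (f : ℝ × ℝ × ℝ → ℝ) (r : ℝ × ℝ × ℝ) : ℝ :=
  deriv (fun s => f (r.1, s, r.2.2)) r.2.1

/-- Partial derivative in the third coordinate `t` of a function on `ℝ³ = (x,y,t)`. -/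
noncomputable def pd3t (f : ℝ × ℝ × ℝ → ℝ) (r : ℝ × ℝ × ℝ) : ℝ :=
  deriv (fun s => f (r.1, r.2.1, s)) r.2.2

/-- Partial derivative in `x` of a function on `ℝ⁴ = (x,y,t,p)`. -/
noncomputable def pd4x (f : ℝ × ℝ × ℝ × ℝ → ℝ) (q : ℝ × ℝ × ℝ × ℝ) : ℝ :=
  deriv (fun s => f (s, q.2.1, q.2.2.1, q.2.2.2)) q.1

/-- Partial derivative in `y` of a function on `ℝ⁴ = (x,y,t,p)`. -/
noncomputable def pd4y (f : ℝ × ℝ × ℝ × ℝ → ℝ) (q : ℝ × ℝ × ℝ × ℝ) : ℝ :=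
  deriv (fun s => f (q.1, s, q.2.2.1, q.2.2.2)) q.2.1

/-- Partial derivative in `t` of a function on `ℝ⁴ = (x,y,t,p)`. -/
noncomputable def pd4t (f : ℝ × ℝ × ℝ × ℝ → ℝ) (q : ℝ × ℝ × ℝ × ℝ) : ℝ :=
  deriv (fun s => f (q.1, q.2.1, s, q.2.2.2)) q.2.2.1

/-- Partial derivative in the spectral variable `p` of a function on `ℝ⁴ = (x,y,t,p)`. -/
noncomputable def pd4p (f : ℝ × ℝ × ℝ × ℝ → ℝ) (q : ℝ × ℝ × ℝ × ℝ) : ℝ :=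
  deriv (fun s => f (q.1, q.2.1, q.2.2.1, s)) q.2.2.2

/-- First Lax operator of the Manakov–Santini system:
`D₁Ψ = Ψ_y − (p − v_x)Ψ_x + u_x Ψ_p`. -/
noncomputable def msD1 (u v : ℝ × ℝ × ℝ → ℝ) (Ψ : ℝ × ℝ × ℝ × ℝ → ℝ)
    (q : ℝ × ℝ × ℝ × ℝ) : ℝ :=
  pd4y Ψ q - (q.2.2.2 - pd3x v (q.1, q.2.1, q.2.2.1)) * pd4x Ψ q
    + pd3x u (q.1, q.2.1, q.2.2.1) * pd4p Ψ q

/-- Second Lax operator of the Manakov–Santini system: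
`D₂Ψ = Ψ_t − (p² − v_x p + u − v_y)Ψ_x + (u_x p + u_y)Ψ_p`. -/
noncomputable def msD2 (u v : ℝ × ℝ × ℝ → ℝ) (Ψ : ℝ × ℝ × ℝ × ℝ → ℝ)
    (q : ℝ × ℝ × ℝ × ℝ) : ℝ :=
  pd4t Ψ q
    - (q.2.2.2 ^ 2 - pd3x v (q.1, q.2.1, q.2.2.1) * q.2.2.2 + u (q.1, q.2.1, q.2.2.1)
        - pd3y v (q.1, q.2.1, q.2.2.1)) * pd4x Ψ q
    + (pd3x u (q.1, q.2.1, q.2.2.1) * q.2.2.2 + pd3y u (q.1, q.2.1, q.2.2.1)) * pd4p Ψ q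


open VectorField

theorem fderiv_prodMk_const_apply {E : Type*} [NormedAddCommGroup E] [NormedSpace ℝ E]
    {a b : E → ℝ} {x : E} (ha : DifferentiableAt ℝ a x) (hb : DifferentiableAt ℝ b x)
    (c c' : ℝ) (w : E) :
    fderiv ℝ (fun y => (a y, c, c', b y)) x w = (fderiv ℝ a x w, 0, 0, fderiv ℝ b x w) := by
  rw [ha.fderiv_prodMk ((differentiableAt_const c).prodMk
    ((differentiableAt_const c').prodMk hb)), DifferentiableAt.fderiv_prodMk
    (differentiableAt_const c) ((differentiableAt_const c').prodMk hb),
    DifferentiableAt.fderiv_prodMk (differentiableAt_const c') hb]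
  simp

theorem forall_fderiv_apply_eq_zero_iff {E : Type*} [NormedAddCommGroup E] [NormedSpace ℝ E]
    {n : WithTop ℕ∞} (W : E → E) :
    (∀ Ψ : E → ℝ, ContDiff ℝ n Ψ → ∀ q, fderiv ℝ Ψ q (W q) = 0) ↔ W = 0 := by
  refine ⟨fun h => funext fun q => ?_, by rintro rfl; simp⟩
  refine SeparatingDual.eq_zero_of_forall_dual_eq_zero (R := ℝ) fun ℓ => ?_
  simpa only [ℓ.fderiv] using h ℓ ℓ.contDiff q

namespace ManakovSantini

lemma pd3x_eq_fderiv {f : ℝ × ℝ × ℝ → ℝ} {r : ℝ × ℝ × ℝ} (hf : DifferentiableAt ℝ f r) :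
    pd3x f r = fderiv ℝ f r (1, 0, 0) :=
  (hf.hasFDerivAt.comp_hasDerivAt r.1
    ((hasDerivAt_id _).prodMk (hasDerivAt_const _ _))).deriv

lemma pd3y_eq_fderiv {f : ℝ × ℝ × ℝ → ℝ} {r : ℝ × ℝ × ℝ} (hf : DifferentiableAt ℝ f r) :
    pd3y f r = fderiv ℝ f r (0, 1, 0) :=
  (hf.hasFDerivAt.comp_hasDerivAt r.2.1
    ((hasDerivAt_const _ _).prodMk ((hasDerivAt_id _).prodMk (hasDerivAt_const _ _)))).deriv

lemma pd3t_eq_fderiv {f : ℝ × ℝ × ℝ → ℝ} {r : ℝ × ℝ × ℝ} (hf : DifferentiableAt ℝ f r) :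
    pd3t f r = fderiv ℝ f r (0, 0, 1) :=
  (hf.hasFDerivAt.comp_hasDerivAt r.2.2
    ((hasDerivAt_const _ _).prodMk ((hasDerivAt_const _ _).prodMk (hasDerivAt_id _)))).deriv

lemma pd4x_eq_fderiv {f : ℝ × ℝ × ℝ × ℝ → ℝ} {q : ℝ × ℝ × ℝ × ℝ} (hf : DifferentiableAt ℝ f q) :
    pd4x f q = fderiv ℝ f q (1, 0, 0, 0) :=
  (hf.hasFDerivAt.comp_hasDerivAt q.1
    ((hasDerivAt_id _).prodMk (hasDerivAt_const _ _))).deriv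

lemma pd4y_eq_fderiv {f : ℝ × ℝ × ℝ × ℝ → ℝ} {q : ℝ × ℝ × ℝ × ℝ} (hf : DifferentiableAt ℝ f q) :
    pd4y f q = fderiv ℝ f q (0, 1, 0, 0) :=
  (hf.hasFDerivAt.comp_hasDerivAt q.2.1
    ((hasDerivAt_const _ _).prodMk ((hasDerivAt_id _).prodMk (hasDerivAt_const _ _)))).deriv

lemma pd4t_eq_fderiv {f : ℝ × ℝ × ℝ × ℝ → ℝ} {q : ℝ × ℝ × ℝ × ℝ} (hf : DifferentiableAt ℝ f q) :
    pd4t f q = fderiv ℝ f q (0, 0, 1, 0) :=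
  (hf.hasFDerivAt.comp_hasDerivAt q.2.2.1 ((hasDerivAt_const _ _).prodMk
    ((hasDerivAt_const _ _).prodMk ((hasDerivAt_id _).prodMk (hasDerivAt_const _ _))))).deriv

lemma pd4p_eq_fderiv {f : ℝ × ℝ × ℝ × ℝ → ℝ} {q : ℝ × ℝ × ℝ × ℝ} (hf : DifferentiableAt ℝ f q) :
    pd4p f q = fderiv ℝ f q (0, 0, 0, 1) :=
  (hf.hasFDerivAt.comp_hasDerivAt q.2.2.2 ((hasDerivAt_const _ _).prodMk
    ((hasDerivAt_const _ _).prodMk ((hasDerivAt_const _ _).prodMk (hasDerivAt_id _))))).deriv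

lemma fderiv_apply_eq_pd3 {f : ℝ × ℝ × ℝ → ℝ} {r : ℝ × ℝ × ℝ} (hf : DifferentiableAt ℝ f r)
    (w : ℝ × ℝ × ℝ) :
    fderiv ℝ f r w = w.1 * pd3x f r + w.2.1 * pd3y f r + w.2.2 * pd3t f r := by
  have hw : w = w.1 • (1, 0, 0) + w.2.1 • (0, 1, 0) + w.2.2 • (0, 0, 1) := by ext <;> simp
  conv_lhs => rw [hw]
  simp only [map_add, map_smul, smul_eq_mul, pd3x_eq_fderiv hf, pd3y_eq_fderiv hf,
    pd3t_eq_fderiv hf]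

lemma fderiv_apply_eq_pd4 {f : ℝ × ℝ × ℝ × ℝ → ℝ} {q : ℝ × ℝ × ℝ × ℝ}
    (hf : DifferentiableAt ℝ f q) (w : ℝ × ℝ × ℝ × ℝ) :
    fderiv ℝ f q w
      = w.1 * pd4x f q + w.2.1 * pd4y f q + w.2.2.1 * pd4t f q + w.2.2.2 * pd4p f q := by
  have hw : w = w.1 • (1, 0, 0, 0) + w.2.1 • (0, 1, 0, 0) + w.2.2.1 • (0, 0, 1, 0)
      + w.2.2.2 • (0, 0, 0, 1) := by ext <;> simp
  conv_lhs => rw [hw]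
  simp only [map_add, map_smul, smul_eq_mul, pd4x_eq_fderiv hf, pd4y_eq_fderiv hf,
    pd4t_eq_fderiv hf, pd4p_eq_fderiv hf]

lemma contDiff_pd3x {f : ℝ × ℝ × ℝ → ℝ} {n : ℕ∞} (hf : ContDiff ℝ (n + 1) f) :
    ContDiff ℝ n (pd3x f) := by
  have : pd3x f = fun r => fderiv ℝ f r (1, 0, 0) :=
    funext fun r => pd3x_eq_fderiv (hf.differentiable (by simp) r)
  rw [this]
  exact (hf.fderiv_right le_rfl).clm_apply contDiff_const

lemma contDiff_pd3y {f : ℝ × ℝ × ℝ → ℝ} {n : ℕ∞} (hf : ContDiff ℝ (n + 1) f) :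
    ContDiff ℝ n (pd3y f) := by
  have : pd3y f = fun r => fderiv ℝ f r (0, 1, 0) :=
    funext fun r => pd3y_eq_fderiv (hf.differentiable (by simp) r)
  rw [this]
  exact (hf.fderiv_right le_rfl).clm_apply contDiff_const

lemma differentiable_pd3x {f : ℝ × ℝ × ℝ → ℝ} (hf : ContDiff ℝ 2 f) :
    Differentiable ℝ (pd3x f) :=
  (contDiff_pd3x (n := 1) hf).differentiable one_ne_zero

lemma differentiable_pd3y {f : ℝ × ℝ × ℝ → ℝ} (hf : ContDiff ℝ 2 f) :
    Differentiable ℝ (pd3y f) :=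
  (contDiff_pd3y (n := 1) hf).differentiable one_ne_zero

lemma pd3x_pd3y_comm {f : ℝ × ℝ × ℝ → ℝ} (hf : ContDiff ℝ 2 f) (r : ℝ × ℝ × ℝ) :
    pd3x (pd3y f) r = pd3y (pd3x f) r := by
  have hf' : Differentiable ℝ (fderiv ℝ f) :=
    (hf.fderiv_right (m := 1) (by norm_num)).differentiable one_ne_zero
  have hdiff (w : ℝ × ℝ × ℝ) : DifferentiableAt ℝ (fun r => fderiv ℝ f r w) r :=
    (hf' r).clm_apply (differentiableAt_const w)
  have hsnd (w w' : ℝ × ℝ × ℝ) :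
      fderiv ℝ (fun r => fderiv ℝ f r w) r w' = fderiv ℝ (fderiv ℝ f) r w' w := by
    rw [fderiv_clm_apply (hf' r) (differentiableAt_const w)]
    simp
  have hx : pd3x f = fun r => fderiv ℝ f r (1, 0, 0) :=
    funext fun r => pd3x_eq_fderiv (hf.differentiable two_ne_zero r)
  have hy : pd3y f = fun r => fderiv ℝ f r (0, 1, 0) :=
    funext fun r => pd3y_eq_fderiv (hf.differentiable two_ne_zero r)
  rw [hx, hy, pd3x_eq_fderiv (hdiff _), pd3y_eq_fderiv (hdiff _), hsnd, hsnd]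
  exact hf.contDiffAt.isSymmSndFDerivAt (by simp) _ _

lemma pd3x_mul {f g : ℝ × ℝ × ℝ → ℝ} {r : ℝ × ℝ × ℝ} (hf : DifferentiableAt ℝ f r)
    (hg : DifferentiableAt ℝ g r) :
    pd3x (fun s => f s * g s) r = pd3x f r * g r + f r * pd3x g r := by
  rw [pd3x_eq_fderiv (hf.fun_mul hg), fderiv_fun_mul hf hg, pd3x_eq_fderiv hf, pd3x_eq_fderiv hg]
  simp only [add_apply, smul_apply, smul_eq_mul]
  ring

def projXYT : (ℝ × ℝ × ℝ × ℝ) →L[ℝ] ℝ × ℝ × ℝ :=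
  (ContinuousLinearMap.id ℝ ℝ).prodMap
    ((ContinuousLinearMap.id ℝ ℝ).prodMap (ContinuousLinearMap.fst ℝ ℝ ℝ))

@[simp] lemma projXYT_apply (q : ℝ × ℝ × ℝ × ℝ) : projXYT q = (q.1, q.2.1, q.2.2.1) := rfl

lemma fderiv_comp_projXYT_apply {g : ℝ × ℝ × ℝ → ℝ} {q : ℝ × ℝ × ℝ × ℝ}
    (hg : DifferentiableAt ℝ g (projXYT q)) (w : ℝ × ℝ × ℝ × ℝ) :
    fderiv ℝ (fun x => g (projXYT x)) q w
      = w.1 * pd3x g (projXYT q) + w.2.1 * pd3y g (projXYT q)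
        + w.2.2.1 * pd3t g (projXYT q) := by
  rw [fderiv_fun_comp q hg projXYT.differentiableAt, ContinuousLinearMap.comp_apply,
    projXYT.fderiv, fderiv_apply_eq_pd3 hg, projXYT_apply]

lemma fderiv_snd_snd_snd_apply (q w : ℝ × ℝ × ℝ × ℝ) :
    fderiv ℝ (fun x : ℝ × ℝ × ℝ × ℝ => x.2.2.2) q w = w.2.2.2 := by
  rw [hasFDerivAt_snd.snd.snd.fderiv]
  rfl

noncomputable def laxField₁ (u v : ℝ × ℝ × ℝ → ℝ) (q : ℝ × ℝ × ℝ × ℝ) : ℝ × ℝ × ℝ × ℝ :=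
  (pd3x v (projXYT q) - q.2.2.2, 1, 0, pd3x u (projXYT q))

noncomputable def laxField₂ (u v : ℝ × ℝ × ℝ → ℝ) (q : ℝ × ℝ × ℝ × ℝ) : ℝ × ℝ × ℝ × ℝ :=
  (pd3x v (projXYT q) * q.2.2.2 - q.2.2.2 ^ 2 - u (projXYT q) + pd3y v (projXYT q), 0, 1,
    pd3x u (projXYT q) * q.2.2.2 + pd3y u (projXYT q))

noncomputable def residualU (u v : ℝ × ℝ × ℝ → ℝ) (r : ℝ × ℝ × ℝ) : ℝ :=
  pd3t (pd3x u) r - (pd3y (pd3y u) r + pd3x (fun s => u s * pd3x u s) r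
    + pd3x v r * pd3y (pd3x u) r - pd3x (pd3x u) r * pd3y v r)

noncomputable def residualV (u v : ℝ × ℝ × ℝ → ℝ) (r : ℝ × ℝ × ℝ) : ℝ :=
  pd3t (pd3x v) r - (pd3y (pd3y v) r + u r * pd3x (pd3x v) r
    + pd3x v r * pd3y (pd3x v) r - pd3x (pd3x v) r * pd3y v r)

variable {u v : ℝ × ℝ × ℝ → ℝ} {Ψ : ℝ × ℝ × ℝ × ℝ → ℝ} {q : ℝ × ℝ × ℝ × ℝ}

lemma msD1_eq_fderiv (hΨ : DifferentiableAt ℝ Ψ q) :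
    msD1 u v Ψ q = fderiv ℝ Ψ q (laxField₁ u v q) := by
  rw [fderiv_apply_eq_pd4 hΨ, msD1, laxField₁]
  simp only [projXYT_apply]
  ring

lemma msD2_eq_fderiv (hΨ : DifferentiableAt ℝ Ψ q) :
    msD2 u v Ψ q = fderiv ℝ Ψ q (laxField₂ u v q) := by
  rw [fderiv_apply_eq_pd4 hΨ, msD2, laxField₂]
  simp only [projXYT_apply]
  ring

lemma differentiable_laxField₁ (hu : ContDiff ℝ 2 u) (hv : ContDiff ℝ 2 v) :
    Differentiable ℝ (laxField₁ u v) := by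
  have hux := differentiable_pd3x hu
  have hvx := differentiable_pd3x hv
  unfold laxField₁
  fun_prop

lemma differentiable_laxField₂ (hu : ContDiff ℝ 2 u) (hv : ContDiff ℝ 2 v) :
    Differentiable ℝ (laxField₂ u v) := by
  have hu' : Differentiable ℝ u := hu.differentiable two_ne_zero
  have hux := differentiable_pd3x hu
  have hvx := differentiable_pd3x hv
  have huy := differentiable_pd3y hu
  have hvy := differentiable_pd3y hv
  unfold laxField₂
  fun_prop

lemma msD1_msD2_sub_msD2_msD1 (hu : ContDiff ℝ 2 u) (hv : ContDiff ℝ 2 v)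
    (hΨ : ContDiff ℝ 2 Ψ) (q : ℝ × ℝ × ℝ × ℝ) :
    msD1 u v (msD2 u v Ψ) q - msD2 u v (msD1 u v Ψ) q
      = fderiv ℝ Ψ q (lieBracket ℝ (laxField₁ u v) (laxField₂ u v) q) := by
  have hΨ' : Differentiable ℝ (fderiv ℝ Ψ) :=
    (hΨ.fderiv_right (m := 1) (by norm_num)).differentiable one_ne_zero
  have hD₁ : msD1 u v Ψ = fun x => fderiv ℝ Ψ x (laxField₁ u v x) :=
    funext fun x => msD1_eq_fderiv (hΨ.differentiable two_ne_zero x)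
  have hD₂ : msD2 u v Ψ = fun x => fderiv ℝ Ψ x (laxField₂ u v x) :=
    funext fun x => msD2_eq_fderiv (hΨ.differentiable two_ne_zero x)
  have hX₁ := differentiable_laxField₁ hu hv
  have hX₂ := differentiable_laxField₂ hu hv
  rw [hD₁, hD₂, msD1_eq_fderiv ((hΨ'.clm_apply hX₂) q), msD2_eq_fderiv ((hΨ'.clm_apply hX₁) q)]
  exact (fderiv_apply_lieBracket hΨ.contDiffAt (by simp) (hX₂ q) (hX₁ q)).symm

lemma lieBracket_laxField (hu : ContDiff ℝ 2 u) (hv : ContDiff ℝ 2 v) :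
    lieBracket ℝ (laxField₁ u v) (laxField₂ u v) q
      = (-residualV u v (projXYT q), 0, 0, -residualU u v (projXYT q)) := by
  have hu' : Differentiable ℝ u := hu.differentiable two_ne_zero
  have hux := differentiable_pd3x hu
  have hvx := differentiable_pd3x hv
  have huy := differentiable_pd3y hu
  have hvy := differentiable_pd3y hv
  rw [lieBracket_eq]
  unfold laxField₁ laxField₂
  beta_reduce
  rw [fderiv_prodMk_const_apply (by fun_prop) (by fun_prop),
    fderiv_prodMk_const_apply (by fun_prop) (by fun_prop)]
  simp (disch := fun_prop) only [Prod.mk_sub_mk, sub_zero, fderiv_fun_sub, fderiv_fun_add,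
    fderiv_fun_mul, fderiv_fun_pow, add_apply, sub_apply, smul_apply, smul_eq_mul,
    fderiv_comp_projXYT_apply, fderiv_snd_snd_snd_apply]
  rw [residualU, residualV, pd3x_mul (hu' _) (hux _), pd3x_pd3y_comm hu, pd3x_pd3y_comm hv]
  ext <;> simp only [projXYT_apply] <;> ring

lemma lieBracket_laxField_eq_zero_iff (hu : ContDiff ℝ 2 u) (hv : ContDiff ℝ 2 v) :
    lieBracket ℝ (laxField₁ u v) (laxField₂ u v) = 0
      ↔ ∀ r, residualU u v r = 0 ∧ residualV u v r = 0 := by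
  simp only [funext_iff, Pi.zero_apply, lieBracket_laxField hu hv, Prod.mk_eq_zero,
    neg_eq_zero, true_and]
  exact ⟨fun h r => (h (r.1, r.2.1, r.2.2, 0)).symm, fun h q => (h (projXYT q)).symm⟩

end ManakovSantini

/-- The Lax operators `D₁`, `D₂` commute on all smooth functions `Ψ(x,y,t,p)` if and only if
`u`, `v` satisfy the Manakov–Santini system. -/
theorem manakov_santini_lax_commute_iff (u v : ℝ × ℝ × ℝ → ℝ)
    (hu : ContDiff ℝ (⊤ : ℕ∞) u) (hv : ContDiff ℝ (⊤ : ℕ∞) v) :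
    (∀ Ψ : ℝ × ℝ × ℝ × ℝ → ℝ, ContDiff ℝ (⊤ : ℕ∞) Ψ →
      ∀ q : ℝ × ℝ × ℝ × ℝ, msD1 u v (msD2 u v Ψ) q = msD2 u v (msD1 u v Ψ) q)
    ↔ (∀ r : ℝ × ℝ × ℝ,
        pd3t (pd3x u) r
          = pd3y (pd3y u) r + pd3x (fun s => u s * pd3x u s) r
            + pd3x v r * pd3y (pd3x u) r - pd3x (pd3x u) r * pd3y v r
        ∧ pd3t (pd3x v) r
          = pd3y (pd3y v) r + u r * pd3x (pd3x v) r
            + pd3x v r * pd3y (pd3x v) r - pd3x (pd3x v) r * pd3y v r) := by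
  have two_le_top : (2 : WithTop ℕ∞) ≤ (⊤ : ℕ∞) := WithTop.coe_le_coe.2 le_top
  have hu₂ := hu.of_le two_le_top
  have hv₂ := hv.of_le two_le_top
  open ManakovSantini in
  calc _ ↔ ∀ Ψ : ℝ × ℝ × ℝ × ℝ → ℝ, ContDiff ℝ (⊤ : ℕ∞) Ψ → ∀ q,
          fderiv ℝ Ψ q (lieBracket ℝ (laxField₁ u v) (laxField₂ u v) q) = 0 :=
        forall₂_congr fun Ψ hΨ => forall_congr' fun q => by
          rw [← sub_eq_zero, msD1_msD2_sub_msD2_msD1 hu₂ hv₂ (hΨ.of_le two_le_top)]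
    _ ↔ lieBracket ℝ (laxField₁ u v) (laxField₂ u v) = 0 := forall_fderiv_apply_eq_zero_iff _
    _ ↔ ∀ r, residualU u v r = 0 ∧ residualV u v r = 0 := lieBracket_laxField_eq_zero_iff hu₂ hv₂
    _ ↔ _ := by simp only [residualU, residualV, sub_eq_zero]
end

section
/- Let α ∈ ℝ and let u, v : ℝ² → ℝ be smooth functions of (x,y). Then the polynomial-valued function f(x,y,p) = α(p² + 2u(x,y)) satisfies the linear equation ∂_y f = (p − v_x)∂_x f − u_x ∂_p f + v_{xx} for all (x,y) ∈ ℝ² and all p ∈ ℝ if and only if 2α(u_y + v_x u_x) = v_{xx} everywhere. (This is the order k = 2 differential reduction of the Manakov–Santini system.) -/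
/-- Partial derivative in `x` of a function on `ℝ² = (x,y)`. -/
noncomputable def pdx (f : ℝ × ℝ → ℝ) (q : ℝ × ℝ) : ℝ :=
  deriv (fun s => f (s, q.2)) q.1

/-- Partial derivative in `y` of a function on `ℝ² = (x,y)`. -/
noncomputable def pdy (f : ℝ × ℝ → ℝ) (q : ℝ × ℝ) : ℝ :=
  deriv (fun s => f (q.1, s)) q.2

/-- Partial derivative in the spectral variable `p` of a function on `ℝ³ = (x,y,p)`. -/
noncomputable def pd3p (f : ℝ × ℝ × ℝ → ℝ) (r : ℝ × ℝ × ℝ) : ℝ :=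
  deriv (fun s => f (r.1, r.2.1, s)) r.2.2

/-!
Substituting `f = α(p² + 2u)` gives `f_y = 2α u_y`, `f_x = 2α u_x` and `f_p = 2α p`, so the
right-hand side of the linearized flow equation becomes `(p − v_x)·2α u_x − u_x·2α p + v_{xx}`,
in which the terms in `p` cancel. The equation therefore does not depend on `p` and says exactly
`2α u_y = −2α v_x u_x + v_{xx}`.
-/

section Deriv

variable {𝕜 : Type*} [NontriviallyNormedField 𝕜]

/-- Holds without differentiability of `g`: `deriv` takes the junk value `0` on both sides. -/
theorem deriv_const_mul_const_add_two_mul (α c : 𝕜) (g : 𝕜 → 𝕜) (x : 𝕜) :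
    deriv (fun s => α * (c + 2 * g s)) x = 2 * α * deriv g x := by
  simp only [deriv_const_mul_field', deriv_const_add']
  ring

theorem deriv_const_mul_sq_add_const (α c x : 𝕜) :
    deriv (fun s => α * (s ^ 2 + c)) x = 2 * α * x := by
  simp only [deriv_const_mul_field', deriv_add_const', deriv_pow_field]
  push_cast
  ring

end Deriv

section OrderTwoPolynomial

variable (α : ℝ) (u : ℝ × ℝ → ℝ) (r : ℝ × ℝ × ℝ)

theorem pd3y_orderTwoPolynomial :
    pd3y (fun s : ℝ × ℝ × ℝ => α * (s.2.2 ^ 2 + 2 * u (s.1, s.2.1))) r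
      = 2 * α * pdy u (r.1, r.2.1) :=
  deriv_const_mul_const_add_two_mul α (r.2.2 ^ 2) (fun s => u (r.1, s)) r.2.1

theorem pd3x_orderTwoPolynomial :
    pd3x (fun s : ℝ × ℝ × ℝ => α * (s.2.2 ^ 2 + 2 * u (s.1, s.2.1))) r
      = 2 * α * pdx u (r.1, r.2.1) :=
  deriv_const_mul_const_add_two_mul α (r.2.2 ^ 2) (fun s => u (s, r.2.1)) r.1

theorem pd3p_orderTwoPolynomial :
    pd3p (fun s : ℝ × ℝ × ℝ => α * (s.2.2 ^ 2 + 2 * u (s.1, s.2.1))) r = 2 * α * r.2.2 :=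
  deriv_const_mul_sq_add_const α (2 * u (r.1, r.2.1)) r.2.2

end OrderTwoPolynomial

theorem order_two_reduction_general (α : ℝ) (u v : ℝ × ℝ → ℝ) :
    (∀ r : ℝ × ℝ × ℝ,
        pd3y (fun s : ℝ × ℝ × ℝ => α * (s.2.2 ^ 2 + 2 * u (s.1, s.2.1))) r
          = (r.2.2 - pdx v (r.1, r.2.1))
              * pd3x (fun s : ℝ × ℝ × ℝ => α * (s.2.2 ^ 2 + 2 * u (s.1, s.2.1))) r
            - pdx u (r.1, r.2.1)
              * pd3p (fun s : ℝ × ℝ × ℝ => α * (s.2.2 ^ 2 + 2 * u (s.1, s.2.1))) r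
            + pdx (pdx v) (r.1, r.2.1))
    ↔ (∀ q : ℝ × ℝ, 2 * α * (pdy u q + pdx v q * pdx u q) = pdx (pdx v) q) := by
  simp only [pd3y_orderTwoPolynomial, pd3x_orderTwoPolynomial, pd3p_orderTwoPolynomial]
  constructor
  · intro h q
    have := h (q.1, q.2, 0)
    linarith
  · intro h r
    have := h (r.1, r.2.1)
    linarith

/-- Order `k = 2` differential reduction of the Manakov–Santini system:
the polynomial `f(x,y,p) = α(p² + 2u)` solves
`∂_y f = (p − v_x)∂_x f − u_x ∂_p f + v_{xx}` if and only if
`2α(u_y + v_x u_x) = v_{xx}` everywhere. -/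
theorem order_two_reduction (α : ℝ) (u v : ℝ × ℝ → ℝ)
    (hu : ContDiff ℝ (⊤ : ℕ∞) u) (hv : ContDiff ℝ (⊤ : ℕ∞) v) :
    (∀ r : ℝ × ℝ × ℝ,
        pd3y (fun s : ℝ × ℝ × ℝ => α * (s.2.2 ^ 2 + 2 * u (s.1, s.2.1))) r
          = (r.2.2 - pdx v (r.1, r.2.1))
              * pd3x (fun s : ℝ × ℝ × ℝ => α * (s.2.2 ^ 2 + 2 * u (s.1, s.2.1))) r
            - pdx u (r.1, r.2.1)
              * pd3p (fun s : ℝ × ℝ × ℝ => α * (s.2.2 ^ 2 + 2 * u (s.1, s.2.1))) r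
            + pdx (pdx v) (r.1, r.2.1))
    ↔ (∀ q : ℝ × ℝ, 2 * α * (pdy u q + pdx v q * pdx u q) = pdx (pdx v) q) :=
  order_two_reduction_general α u v
end

section
/- Let α ∈ ℝ and let u, v, u₂ : ℝ² → ℝ be smooth functions of (x,y) such that ∂_x u₂ = u_y + v_x u_x everywhere. Suppose the polynomial-valued function f(x,y,p) = α(p³ + 3p·u(x,y) + 3u₂(x,y)) satisfies the linear equation ∂_y f = (p − v_x)∂_x f − u_x ∂_p f + v_{xx} for all (x,y) ∈ ℝ² and all p ∈ ℝ. Then 3α( ∂_y(u_y + u_x v_x) + ∂_x(u_y v_x + u_x v_x² + u u_x) ) = v_{xxx} everywhere. (This is the order k = 3 differential reduction of the Manakov–Santini system.) -/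
section PartialDerivatives

variable {f g : ℝ × ℝ → ℝ} {q : ℝ × ℝ}

lemma hasDerivAt_pdx (hf : DifferentiableAt ℝ f q) :
    HasDerivAt (fun s => f (s, q.2)) (pdx f q) q.1 :=
  (hf.comp q.1 (differentiableAt_id.prodMk (differentiableAt_const q.2))).hasDerivAt

lemma hasDerivAt_pdy (hf : DifferentiableAt ℝ f q) :
    HasDerivAt (fun s => f (q.1, s)) (pdy f q) q.2 :=
  (hf.comp q.2 ((differentiableAt_const q.1).prodMk differentiableAt_id)).hasDerivAt

lemma pdx_eq_fderiv (hf : DifferentiableAt ℝ f q) : pdx f q = fderiv ℝ f q (1, 0) :=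
  (hf.hasFDerivAt.comp_hasDerivAt q.1 ((hasDerivAt_id q.1).prodMk (hasDerivAt_const q.1 q.2))).deriv

lemma pdy_eq_fderiv (hf : DifferentiableAt ℝ f q) : pdy f q = fderiv ℝ f q (0, 1) :=
  (hf.hasFDerivAt.comp_hasDerivAt q.2 ((hasDerivAt_const q.2 q.1).prodMk (hasDerivAt_id q.2))).deriv

lemma pdx_eq_fun_fderiv (hf : Differentiable ℝ f) : pdx f = fun q => fderiv ℝ f q (1, 0) :=
  funext fun q => pdx_eq_fderiv (hf q)

lemma pdy_eq_fun_fderiv (hf : Differentiable ℝ f) : pdy f = fun q => fderiv ℝ f q (0, 1) :=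
  funext fun q => pdy_eq_fderiv (hf q)

lemma pdx_add (hf : DifferentiableAt ℝ f q) (hg : DifferentiableAt ℝ g q) :
    pdx (fun s => f s + g s) q = pdx f q + pdx g q :=
  ((hasDerivAt_pdx hf).add (hasDerivAt_pdx hg)).deriv

lemma pdx_const_mul (c : ℝ) (f : ℝ × ℝ → ℝ) (q : ℝ × ℝ) :
    pdx (fun s => c * f s) q = c * pdx f q :=
  deriv_const_mul_field c

lemma contDiff_pdx {m n : WithTop ℕ∞} (hf : ContDiff ℝ n f) (hmn : m + 1 ≤ n) :
    ContDiff ℝ m (pdx f) := by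
  have hn : n ≠ 0 := (zero_lt_one.trans_le (le_add_self.trans hmn)).ne'
  rw [pdx_eq_fun_fderiv (hf.differentiable hn)]
  exact (hf.fderiv_right hmn).clm_apply contDiff_const

lemma contDiff_pdy {m n : WithTop ℕ∞} (hf : ContDiff ℝ n f) (hmn : m + 1 ≤ n) :
    ContDiff ℝ m (pdy f) := by
  have hn : n ≠ 0 := (zero_lt_one.trans_le (le_add_self.trans hmn)).ne'
  rw [pdy_eq_fun_fderiv (hf.differentiable hn)]
  exact (hf.fderiv_right hmn).clm_apply contDiff_const

lemma pdx_pdy_comm (hf : ContDiff ℝ 2 f) (q : ℝ × ℝ) : pdx (pdy f) q = pdy (pdx f) q := by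
  have hfd : Differentiable ℝ f := hf.differentiable two_ne_zero
  have hf' : Differentiable ℝ (fderiv ℝ f) :=
    (hf.fderiv_right (m := 1) le_rfl).differentiable one_ne_zero
  have hslice (w : ℝ × ℝ) :
      fderiv ℝ (fun z => fderiv ℝ f z w) q = (fderiv ℝ (fderiv ℝ f) q).flip w := by
    simpa using fderiv_clm_apply (hf' q) (differentiableAt_const w)
  rw [pdx_eq_fderiv ((contDiff_pdy hf (m := 1) le_rfl).differentiable one_ne_zero q),
    pdy_eq_fderiv ((contDiff_pdx hf (m := 1) le_rfl).differentiable one_ne_zero q),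
    pdy_eq_fun_fderiv hfd, pdx_eq_fun_fderiv hfd, hslice, hslice]
  exact (hf.contDiffAt.isSymmSndFDerivAt (by simp)) (1, 0) (0, 1)

end PartialDerivatives

section Reduction

variable (α : ℝ) (u v u₂ : ℝ × ℝ → ℝ)

/-- `α (L³)₊`, as a function of `(x, y, p)`. -/
def lCubePlus (s : ℝ × ℝ × ℝ) : ℝ :=
  α * (s.2.2 ^ 3 + 3 * s.2.2 * u (s.1, s.2.1) + 3 * u₂ (s.1, s.2.1))

def IsLinearizedYFlowSolution (f : ℝ × ℝ × ℝ → ℝ) : Prop :=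
  ∀ r : ℝ × ℝ × ℝ, pd3y f r = (r.2.2 - pdx v (r.1, r.2.1)) * pd3x f r
    - pdx u (r.1, r.2.1) * pd3p f r + pdx (pdx v) (r.1, r.2.1)

noncomputable def reductionFlux (s : ℝ × ℝ) : ℝ :=
  pdy u s * pdx v s + pdx u s * pdx v s ^ 2 + u s * pdx u s

variable {α u v u₂} {q : ℝ × ℝ}

lemma pd3x_lCubePlus (hu : DifferentiableAt ℝ u q) (hu₂ : DifferentiableAt ℝ u₂ q) (p : ℝ) :
    pd3x (lCubePlus α u u₂) (q.1, q.2, p) = α * (3 * p * pdx u q + 3 * pdx u₂ q) :=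
  ((((hasDerivAt_pdx hu).const_mul (3 * p)).const_add (p ^ 3)).add
    ((hasDerivAt_pdx hu₂).const_mul 3)).const_mul α |>.deriv

lemma pd3y_lCubePlus (hu : DifferentiableAt ℝ u q) (hu₂ : DifferentiableAt ℝ u₂ q) (p : ℝ) :
    pd3y (lCubePlus α u u₂) (q.1, q.2, p) = α * (3 * p * pdy u q + 3 * pdy u₂ q) :=
  ((((hasDerivAt_pdy hu).const_mul (3 * p)).const_add (p ^ 3)).add
    ((hasDerivAt_pdy hu₂).const_mul 3)).const_mul α |>.deriv

lemma pd3p_lCubePlus (q : ℝ × ℝ) (p : ℝ) :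
    pd3p (lCubePlus α u u₂) (q.1, q.2, p) = α * (3 * p ^ 2 + 3 * u q) := by
  have h := (((hasDerivAt_pow 3 p).add (((hasDerivAt_id p).const_mul 3).mul_const (u q))).add_const
    (3 * u₂ q)).const_mul α
  refine h.deriv.trans ?_
  norm_num

lemma three_mul_pdy_add_reductionFlux (hu : DifferentiableAt ℝ u q)
    (hu₂ : DifferentiableAt ℝ u₂ q) (hrec : pdx u₂ q = pdy u q + pdx v q * pdx u q)
    (hsol : IsLinearizedYFlowSolution u v (lCubePlus α u u₂)) :
    3 * α * (pdy u₂ q + reductionFlux u v q) = pdx (pdx v) q := by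
  have h := hsol (q.1, q.2, 0)
  rw [pd3y_lCubePlus hu hu₂, pd3x_lCubePlus hu hu₂, pd3p_lCubePlus] at h
  unfold reductionFlux
  linear_combination h - 3 * α * pdx v q * hrec

lemma contDiff_reductionFlux {n : WithTop ℕ∞} (hu : ContDiff ℝ (n + 1) u)
    (hv : ContDiff ℝ (n + 1) v) : ContDiff ℝ n (reductionFlux u v) := by
  have hu' := contDiff_pdx hu le_rfl
  have hv' := contDiff_pdx hv le_rfl
  exact ((contDiff_pdy hu le_rfl).mul hv').add (hu'.mul (hv'.pow 2)) |>.add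
    ((hu.of_le le_self_add).mul hu')

end Reduction

/-- Order `k = 3` differential reduction of the Manakov–Santini system: if
`∂_x u₂ = u_y + v_x u_x` and the polynomial `f(x,y,p) = α(p³ + 3p u + 3u₂)` solves
`∂_y f = (p − v_x)∂_x f − u_x ∂_p f + v_{xx}`, then
`3α(∂_y(u_y + u_x v_x) + ∂_x(u_y v_x + u_x v_x² + u u_x)) = v_{xxx}` everywhere. -/
theorem order_three_reduction (α : ℝ) (u v u₂ : ℝ × ℝ → ℝ)
    (hu : ContDiff ℝ (⊤ : ℕ∞) u) (hv : ContDiff ℝ (⊤ : ℕ∞) v)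
    (hu₂ : ContDiff ℝ (⊤ : ℕ∞) u₂)
    (hrec : ∀ q : ℝ × ℝ, pdx u₂ q = pdy u q + pdx v q * pdx u q)
    (heq : ∀ r : ℝ × ℝ × ℝ,
        pd3y (fun s : ℝ × ℝ × ℝ =>
            α * (s.2.2 ^ 3 + 3 * s.2.2 * u (s.1, s.2.1) + 3 * u₂ (s.1, s.2.1))) r
          = (r.2.2 - pdx v (r.1, r.2.1))
              * pd3x (fun s : ℝ × ℝ × ℝ =>
                  α * (s.2.2 ^ 3 + 3 * s.2.2 * u (s.1, s.2.1) + 3 * u₂ (s.1, s.2.1))) r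
            - pdx u (r.1, r.2.1)
              * pd3p (fun s : ℝ × ℝ × ℝ =>
                  α * (s.2.2 ^ 3 + 3 * s.2.2 * u (s.1, s.2.1) + 3 * u₂ (s.1, s.2.1))) r
            + pdx (pdx v) (r.1, r.2.1)) :
    ∀ q : ℝ × ℝ,
      3 * α * (pdy (fun s => pdy u s + pdx u s * pdx v s) q
          + pdx (fun s => pdy u s * pdx v s + pdx u s * (pdx v s) ^ 2 + u s * pdx u s) q)
        = pdx (pdx (pdx v)) q := by
  have hC2 : ((2 : ℕ∞) : WithTop ℕ∞) ≤ ((⊤ : ℕ∞) : WithTop ℕ∞) := by exact_mod_cast le_top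
  have hu₂' : ContDiff ℝ 2 u₂ := hu₂.of_le hC2
  have hflux : ContDiff ℝ 1 (reductionFlux u v) :=
    contDiff_reductionFlux (hu.of_le hC2) (hv.of_le hC2)
  have hvxx : pdx (pdx v) = fun s => 3 * α * (pdy u₂ s + reductionFlux u v s) :=
    funext fun s => (three_mul_pdy_add_reductionFlux (hu.differentiable (by simp) s)
      (hu₂.differentiable (by simp) s) (hrec s) heq).symm
  have hu₂x : (fun s => pdy u s + pdx u s * pdx v s) = pdx u₂ :=
    funext fun s => by rw [hrec s, mul_comm]
  intro q
  change 3 * α * (pdy _ q + pdx (reductionFlux u v) q) = _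
  rw [hu₂x, ← pdx_pdy_comm hu₂' q, hvxx, pdx_const_mul,
    pdx_add ((contDiff_pdy hu₂' le_rfl).differentiable one_ne_zero q)
      (hflux.differentiable one_ne_zero q)]
end

section
/- Let k ≥ 4 be an integer, α, β ∈ ℝ with β ≠ 0, and let u, f₀, f₁, …, f_{k−3} : ℝ² → ℝ be smooth functions of (x,y). Define the polynomial-valued function f(x,y,p) = β p^k + kβ u(x,y) p^{k−2} − α p + Σ_{i=0}^{k−3} f_i(x,y) p^i. Then f satisfies ∂_y f = (p − α u) ∂_x f − u_x ∂_p f for all (x,y) ∈ ℝ² and all p ∈ ℝ if and only if the following hydrodynamic-type system holds everywhere: ∂_y u = (kβ)⁻¹ ∂_x f_{k−3} − α u ∂_x u; ∂_y f_{k−3} = ∂_x f_{k−4} − α u ∂_x f_{k−3} − k(k−2)β u ∂_x u; ∂_y f_i = ∂_x f_{i−1} − α u ∂_x f_i − (i+1) f_{i+1} ∂_x u for each i with 0 < i < k−3; and ∂_y f₀ = − α u ∂_x f₀ − (f₁ − α) ∂_x u. -/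
/-- The degree-`k` polynomial `f = β p^k + kβ u p^{k−2} − α p + Σ_{i=0}^{k−3} f_i p^i`
appearing in the order-`k` reduction of the interpolating-system hierarchy. -/
noncomputable def redPoly (k : ℕ) (α β : ℝ) (u : ℝ × ℝ → ℝ) (F : ℕ → ℝ × ℝ → ℝ)
    (r : ℝ × ℝ × ℝ) : ℝ :=
  β * r.2.2 ^ k + (k : ℝ) * β * u (r.1, r.2.1) * r.2.2 ^ (k - 2) - α * r.2.2
    + ∑ i ∈ Finset.range (k - 2), F i (r.1, r.2.1) * r.2.2 ^ i

/-!
Write `f = Σ_j c_j(x, y) p^j`. Comparing coefficients of `p^n`, the equation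
`∂_y f = (p - a) ∂_x f - b ∂_p f` is equivalent to the recursion
`∂_y c_n = ∂_x c_{n-1} - a ∂_x c_n - (n + 1) b c_{n+1}`. For the reduction polynomial, with
`a = α u` and `b = u_x`, the equations for `p^k` and `p^(k-1)` hold identically, the one for
`p^(k-2)` is the equation for `u_y` (after dividing by `kβ`), and the lower ones are the equations
for `f_(k-3), …, f_0`.
-/

open Polynomial Finset

noncomputable def polyOfCoeffs (N : ℕ) (d : ℕ → ℝ) : ℝ[X] :=
  ∑ j ∈ range N, C (d j) * X ^ j

lemma eval_polyOfCoeffs (N : ℕ) (d : ℕ → ℝ) (p : ℝ) :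
    (polyOfCoeffs N d).eval p = ∑ j ∈ range N, d j * p ^ j := by
  simp [polyOfCoeffs, eval_finsetSum]

lemma coeff_polyOfCoeffs {N : ℕ} {d : ℕ → ℝ} (hd : ∀ n ≥ N, d n = 0) (n : ℕ) :
    (polyOfCoeffs N d).coeff n = d n := by
  by_cases hn : n < N
  · simp [polyOfCoeffs, coeff_C_mul, coeff_X_pow, hn]
  · simp [polyOfCoeffs, coeff_C_mul, coeff_X_pow, hn, hd n (not_lt.1 hn)]

lemma forall_eval_transport_iff (Y Z P : ℝ[X]) (a b : ℝ) :
    (∀ p, Y.eval p = (p - a) * Z.eval p - b * P.derivative.eval p) ↔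
      Y.coeff 0 = -a * Z.coeff 0 - b * P.coeff 1 ∧
      ∀ n : ℕ, Y.coeff (n + 1)
        = Z.coeff n - a * Z.coeff (n + 1) - b * ((n + 2) * P.coeff (n + 2)) := by
  have hpoly : (∀ p, Y.eval p = (p - a) * Z.eval p - b * P.derivative.eval p) ↔
      Y = (X - C a) * Z - C b * derivative P :=
    ⟨fun h => Polynomial.funext fun p => by simpa using h p, fun h p => by simp [h]⟩
  rw [hpoly, Polynomial.ext_iff]
  constructor
  · intro h
    refine ⟨by simpa [sub_mul, coeff_derivative] using h 0, fun n => ?_⟩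
    have := h (n + 1)
    simp only [sub_mul, coeff_sub, coeff_X_mul, coeff_C_mul, coeff_derivative] at this
    rw [this]; push_cast; ring
  · rintro ⟨h0, hs⟩ (_ | n)
    · simpa [sub_mul, coeff_derivative] using h0
    · simp only [sub_mul, coeff_sub, coeff_X_mul, coeff_C_mul, coeff_derivative, hs n]
      push_cast; ring

lemma deriv_sum_mul_pow {N : ℕ} {g : ℕ → ℝ → ℝ} {t : ℝ}
    (hg : ∀ j ∈ range N, DifferentiableAt ℝ (g j) t) (p : ℝ) :
    deriv (fun s => ∑ j ∈ range N, g j s * p ^ j) t = ∑ j ∈ range N, deriv (g j) t * p ^ j := by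
  rw [deriv_fun_sum fun j hj => (hg j hj).mul_const _]
  exact sum_congr rfl fun j _ => deriv_mul_const_field _

noncomputable def polyInP (N : ℕ) (c : ℕ → ℝ × ℝ → ℝ) (r : ℝ × ℝ × ℝ) : ℝ :=
  (polyOfCoeffs N fun j => c j (r.1, r.2.1)).eval r.2.2

section polyInP

variable {N : ℕ} {c : ℕ → ℝ × ℝ → ℝ}

lemma pd3x_polyInP (hc : ∀ j < N, Differentiable ℝ (c j)) (r : ℝ × ℝ × ℝ) :
    pd3x (polyInP N c) r = polyInP N (fun j => pdx (c j)) r := by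
  simp only [pd3x, pdx, polyInP, eval_polyOfCoeffs]
  exact deriv_sum_mul_pow (fun j hj => by have := hc j (mem_range.1 hj); fun_prop) _

lemma pd3y_polyInP (hc : ∀ j < N, Differentiable ℝ (c j)) (r : ℝ × ℝ × ℝ) :
    pd3y (polyInP N c) r = polyInP N (fun j => pdy (c j)) r := by
  simp only [pd3y, pdy, polyInP, eval_polyOfCoeffs]
  exact deriv_sum_mul_pow (fun j hj => by have := hc j (mem_range.1 hj); fun_prop) _

lemma pd3p_polyInP (r : ℝ × ℝ × ℝ) :
    pd3p (polyInP N c) r = (polyOfCoeffs N fun j => c j (r.1, r.2.1)).derivative.eval r.2.2 := by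
  simp only [pd3p, polyInP]; exact Polynomial.deriv (𝕜 := ℝ) ..

theorem polyInP_transport_iff (hc : ∀ j < N, Differentiable ℝ (c j)) (hN : ∀ j ≥ N, c j = 0)
    (a b : ℝ × ℝ → ℝ) :
    (∀ r : ℝ × ℝ × ℝ, pd3y (polyInP N c) r
        = (r.2.2 - a (r.1, r.2.1)) * pd3x (polyInP N c) r - b (r.1, r.2.1) * pd3p (polyInP N c) r)
      ↔ ∀ q : ℝ × ℝ, pdy (c 0) q = -a q * pdx (c 0) q - b q * c 1 q ∧
        ∀ n : ℕ, pdy (c (n + 1)) q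
          = pdx (c n) q - a q * pdx (c (n + 1)) q - b q * ((n + 2) * c (n + 2) q) := by
  have hx : ∀ q, ∀ j ≥ N, pdx (c j) q = 0 := fun q j hj => by simp [pdx, hN j hj]
  have hy : ∀ q, ∀ j ≥ N, pdy (c j) q = 0 := fun q j hj => by simp [pdy, hN j hj]
  simp only [pd3x_polyInP hc, pd3y_polyInP hc, pd3p_polyInP, polyInP, Prod.forall]
  refine forall_congr' fun x => forall_congr' fun y => ?_
  rw [forall_eval_transport_iff]
  simp only [coeff_polyOfCoeffs (hx _), coeff_polyOfCoeffs (hy _),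
    coeff_polyOfCoeffs fun j hj => congrFun (hN j hj) (x, y)]

end polyInP

/-- The term `-α p` of `redPoly` goes into the coefficient of `p^1`, which for `k ≥ 4` is
`f_1 - α`. -/
noncomputable def redCoeff (k : ℕ) (α β : ℝ) (u : ℝ × ℝ → ℝ) (F : ℕ → ℝ × ℝ → ℝ) (j : ℕ) :
    ℝ × ℝ → ℝ :=
  if j < k - 2 then fun q => F j q - if j = 1 then α else 0
  else if j = k - 2 then fun q => k * β * u q
  else if j = k then fun _ => β
  else 0

section redCoeff

variable {k : ℕ} {α β : ℝ} {u : ℝ × ℝ → ℝ} {F : ℕ → ℝ × ℝ → ℝ}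

lemma redCoeff_apply (j : ℕ) (q : ℝ × ℝ) :
    redCoeff k α β u F j q =
      if j < k - 2 then F j q - (if j = 1 then α else 0)
      else if j = k - 2 then k * β * u q
      else if j = k then β else 0 := by
  unfold redCoeff; split_ifs <;> rfl

lemma pdx_redCoeff (j : ℕ) (q : ℝ × ℝ) :
    pdx (redCoeff k α β u F j) q =
      if j < k - 2 then pdx (F j) q else if j = k - 2 then k * β * pdx u q else 0 := by
  unfold redCoeff; split_ifs <;> simp [pdx, deriv_const_mul_field']

lemma pdy_redCoeff (j : ℕ) (q : ℝ × ℝ) :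
    pdy (redCoeff k α β u F j) q =
      if j < k - 2 then pdy (F j) q else if j = k - 2 then k * β * pdy u q else 0 := by
  unfold redCoeff; split_ifs <;> simp [pdy, deriv_const_mul_field']

lemma redCoeff_eq_zero_of_lt {j : ℕ} (hj : k < j) : redCoeff k α β u F j = 0 := by
  unfold redCoeff; split_ifs <;> first | omega | rfl

lemma differentiable_redCoeff (hu : Differentiable ℝ u) (hF : ∀ i < k - 2, Differentiable ℝ (F i))
    (j : ℕ) : Differentiable ℝ (redCoeff k α β u F j) := by
  unfold redCoeff
  split_ifs with h
  · have := hF j h; fun_prop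
  all_goals fun_prop

lemma redPoly_eq_polyInP (hk : 4 ≤ k) :
    redPoly k α β u F = polyInP (k + 1) (redCoeff k α β u F) := by
  obtain ⟨m, rfl⟩ : ∃ m, k = m + 4 := ⟨k - 4, by omega⟩
  funext ⟨x, y, p⟩
  have hlow : ∀ j ∈ range (m + 2), redCoeff (m + 4) α β u F j (x, y) * p ^ j
      = F j (x, y) * p ^ j - if j = 1 then α * p else 0 := fun j hj => by
    rw [redCoeff_apply, if_pos (by simpa using hj)]
    split_ifs with h1 <;> simp [h1, sub_mul]
  simp only [redPoly, polyInP, eval_polyOfCoeffs]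
  rw [show m + 4 + 1 = m + 2 + 3 from rfl, sum_range_add, sum_congr rfl hlow, sum_sub_distrib,
    sum_ite_eq', if_pos (by simp)]
  simp [sum_range_succ, redCoeff_apply]
  ring

lemma redCoeff_recursion_iff (hk : 4 ≤ k) (hβ : β ≠ 0) (q : ℝ × ℝ) :
    (pdy (redCoeff k α β u F 0) q
        = -(α * u q) * pdx (redCoeff k α β u F 0) q - pdx u q * redCoeff k α β u F 1 q ∧
      ∀ n : ℕ, pdy (redCoeff k α β u F (n + 1)) q
        = pdx (redCoeff k α β u F n) q - α * u q * pdx (redCoeff k α β u F (n + 1)) q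
          - pdx u q * ((n + 2) * redCoeff k α β u F (n + 2) q))
    ↔ (pdy u q = ((k : ℝ) * β)⁻¹ * pdx (F (k - 3)) q - α * u q * pdx u q
        ∧ pdy (F (k - 3)) q
            = pdx (F (k - 4)) q - α * u q * pdx (F (k - 3)) q
              - (k : ℝ) * ((k : ℝ) - 2) * β * u q * pdx u q
        ∧ (∀ i : ℕ, 0 < i → i < k - 3 →
            pdy (F i) q
              = pdx (F (i - 1)) q - α * u q * pdx (F i) q
                - ((i : ℝ) + 1) * F (i + 1) q * pdx u q)
        ∧ pdy (F 0) q = -(α * u q) * pdx (F 0) q - (F 1 q - α) * pdx u q) := by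
  obtain ⟨m, rfl⟩ : ∃ m, k = m + 4 := ⟨k - 4, by omega⟩
  simp only [pdx_redCoeff, pdy_redCoeff, redCoeff_apply, show m + 4 - 2 = m + 2 from rfl,
    show m + 4 - 3 = m + 1 from rfl, show m + 4 - 4 = m from rfl]
  have hkβ : ((m + 4 : ℕ) : ℝ) * β ≠ 0 := mul_ne_zero (by positivity) hβ
  constructor
  · rintro ⟨h0, hs⟩
    refine ⟨?_, ?_, fun i hi0 hi => ?_, ?_⟩
    · have h := hs (m + 1)
      simp (disch := omega) only [if_pos, if_neg, ↓reduceIte] at h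
      field_simp
      linear_combination h
    · have h := hs m
      simp (disch := omega) only [if_pos, if_neg, ↓reduceIte] at h
      push_cast at h ⊢
      linear_combination h
    · obtain ⟨n, rfl⟩ : ∃ n, i = n + 1 := ⟨i - 1, by omega⟩
      have h := hs n
      simp (disch := omega) only [if_pos, if_neg] at h
      push_cast at h ⊢
      linear_combination h
    · simp (disch := omega) only [if_pos, ↓reduceIte] at h0
      linear_combination h0
  · rintro ⟨hU, hF3, hmid, hF0⟩
    refine ⟨?_, fun n => ?_⟩
    · simp (disch := omega) only [if_pos, ↓reduceIte]
      linear_combination hF0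
    obtain hn | rfl | rfl | rfl | hn :
        n < m ∨ n = m ∨ n = m + 1 ∨ n = m + 2 ∨ m + 2 < n := by omega
    · have h := hmid (n + 1) (by omega) (by omega)
      simp (disch := omega) only [if_pos, if_neg]
      push_cast at h ⊢
      linear_combination h
    · simp (disch := omega) only [if_pos, if_neg, ↓reduceIte]
      push_cast at hF3 ⊢
      linear_combination hF3
    · simp (disch := omega) only [if_pos, if_neg, ↓reduceIte]
      rw [hU]
      field_simp
      ring
    · -- the coefficient of `p^(k-1)`: `kβ u_x` from `p ∂_x f` cancels `u_x ∂_p (β p^k)`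
      simp (disch := omega) only [if_pos, if_neg, ↓reduceIte]
      push_cast
      ring
    · simp (disch := omega) only [if_pos, if_neg]
      ring

end redCoeff

/-- For `k ≥ 4`, the polynomial `f = β p^k + kβ u p^{k−2} − α p + Σ_{i=0}^{k−3} f_i p^i`
solves `∂_y f = (p − α u)∂_x f − u_x ∂_p f` if and only if the coefficients `u`, `f_i`
satisfy the stated closed system of hydrodynamic type. -/
theorem order_k_reduction_hydrodynamic_system (k : ℕ) (hk : 4 ≤ k) (α β : ℝ) (hβ : β ≠ 0)
    (u : ℝ × ℝ → ℝ) (F : ℕ → ℝ × ℝ → ℝ) (hu : ContDiff ℝ (⊤ : ℕ∞) u)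
    (hF : ∀ i ≤ k - 3, ContDiff ℝ (⊤ : ℕ∞) (F i)) :
    (∀ r : ℝ × ℝ × ℝ,
        pd3y (redPoly k α β u F) r
          = (r.2.2 - α * u (r.1, r.2.1)) * pd3x (redPoly k α β u F) r
            - pdx u (r.1, r.2.1) * pd3p (redPoly k α β u F) r)
    ↔ (∀ q : ℝ × ℝ,
        pdy u q = ((k : ℝ) * β)⁻¹ * pdx (F (k - 3)) q - α * u q * pdx u q
        ∧ pdy (F (k - 3)) q
            = pdx (F (k - 4)) q - α * u q * pdx (F (k - 3)) q
              - (k : ℝ) * ((k : ℝ) - 2) * β * u q * pdx u q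
        ∧ (∀ i : ℕ, 0 < i → i < k - 3 →
            pdy (F i) q
              = pdx (F (i - 1)) q - α * u q * pdx (F i) q
                - ((i : ℝ) + 1) * F (i + 1) q * pdx u q)
        ∧ pdy (F 0) q = -(α * u q) * pdx (F 0) q - (F 1 q - α) * pdx u q) := by
  have hud : Differentiable ℝ u := hu.differentiable (by simp)
  have hFd : ∀ i < k - 2, Differentiable ℝ (F i) :=
    fun i hi => (hF i (by omega)).differentiable (by simp)
  rw [redPoly_eq_polyInP hk, polyInP_transport_iff (fun j _ => differentiable_redCoeff hud hFd j)
    (fun j hj => redCoeff_eq_zero_of_lt (by omega)) (fun q => α * u q) (pdx u)]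
  exact forall_congr' fun q => redCoeff_recursion_iff hk hβ q
end
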